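/- arXiv:1801.01354 — 4 statements merged into one kernel-verified Lean document; each statement's English description precedes it below -/
import Mathlib

section
/- Let p be a prime and A a commutative ring in which p is not a zero divisor. Let φ : A → A be a ring endomorphism which is a Frobenius lift, i.e. φ(a) - a^p ∈ pA for every a ∈ A. Then there exists a unique ring homomorphism β : A → 𝕎 A into the ring of p-typical Witt vectors of A such that for every a ∈ A and every n ∈ ℕ, the n-th ghost component of β(a) equals φⁿ(a), the n-fold iterate of φ applied to a. In particular the 0-th ghost component of β(a) is a, so β is a ring-homomorphism section of the projection 𝕎 A → A onto the 0-th component. -/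
/-!
Since `p` is a nonzerodivisor, the ghost map `𝕎 A → (ℕ → A)` is injective: the `n`-th ghost
component is `pⁿ xₙ` plus a polynomial in `x₀, …, xₙ₋₁`. Hence `β` is unique, and it exists as a
ring map as soon as `a ↦ (φⁿ a)ₙ` lands in the image of the ghost map. For that we solve for the
Witt coefficients one at a time; the division by `pⁿ⁺¹` needed in step `n + 1` is possible because
`φ x ^ p ^ k ≡ x ^ p ^ (k + 1) mod p ^ (k + 1)` for a Frobenius lift, which makes
`φ (wₙ x) ≡ wₙ₊₁ x mod pⁿ⁺¹` for the ghost polynomials `wₙ`.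
-/

open Finset

namespace RingHom

variable {R S T : Type*} [NonAssocSemiring R] [NonAssocSemiring S] [NonAssocSemiring T]

theorem existsUnique_comp_eq_of_injective {g : S →+* T} (hg : Function.Injective g)
    (f : R →+* T) (hf : ∀ r, f r ∈ g.rangeS) : ∃! h : R →+* S, g.comp h = f := by
  have hinv : Function.LeftInverse (Function.invFun g) g := Function.leftInverse_invFun hg
  refine ⟨(RingEquiv.ofLeftInverseS hinv).symm.toRingHom.comp (f.codRestrict g.rangeS hf),
    ?_, fun h hh => (cancel_left hg).mp (hh.trans ?_)⟩ <;>
  · ext r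
    simp [RingEquiv.ofLeftInverseS_symm_apply, Function.invFun_eq (hf r)]

end RingHom

namespace WittVector

variable {p : ℕ} [Fact p.Prime] {R : Type*} [CommRing R]

theorem ghostComponent_eq_sum (n : ℕ) (x : WittVector p R) :
    ghostComponent n x = ∑ i ∈ range (n + 1), (p : R) ^ i * x.coeff i ^ p ^ (n - i) := by
  rw [ghostComponent_apply, aeval_wittPolynomial]

theorem ghostMap_injective (hR : (p : R) ∈ nonZeroDivisors R) :
    Function.Injective (ghostMap : WittVector p R → ℕ → R) := by
  intro x y hxy
  ext n
  induction n using Nat.strong_induction_on with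
  | _ n ih =>
    have hn := congr_fun hxy n
    simp only [ghostMap_apply, ghostComponent_eq_sum, sum_range_succ, Nat.sub_self, pow_zero,
      pow_one] at hn
    rw [sum_congr rfl fun i hi => by rw [ih i (mem_range.mp hi)]] at hn
    exact (mul_cancel_left_mem_nonZeroDivisors (pow_mem hR n)).mp (add_left_cancel hn)

variable (p) in
/-- `cₙ` is a junk value when `pⁿ` does not divide the right-hand side. -/
noncomputable def coeffOfGhost (g : ℕ → R) : ℕ → R
  | n => Classical.epsilon fun c : R =>
      (p : R) ^ n * c = g n - ∑ i : Fin n, (p : R) ^ (i : ℕ) * coeffOfGhost g i ^ p ^ (n - i)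

theorem exists_ghostComponent_eq_of_pow_succ_dvd (g : ℕ → R)
    (hg : ∀ (x : WittVector p R) (n : ℕ), ghostComponent n x = g n →
      (p : R) ^ (n + 1) ∣ g (n + 1) - ghostComponent (n + 1) x) :
    ∃ x : WittVector p R, ∀ n, ghostComponent n x = g n := by
  set x : WittVector p R := mk p (coeffOfGhost p g)
  have hcoeff (n : ℕ) (hdvd : (p : R) ^ n ∣
      g n - ∑ i ∈ range n, (p : R) ^ i * x.coeff i ^ p ^ (n - i)) :
      ghostComponent n x = g n := by
    have hspec : (p : R) ^ n * x.coeff n =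
        g n - ∑ i ∈ range n, (p : R) ^ i * x.coeff i ^ p ^ (n - i) := by
      obtain ⟨c, hc⟩ := hdvd
      rw [coeff_mk, coeffOfGhost, Fin.sum_univ_eq_sum_range
        (fun i => (p : R) ^ i * coeffOfGhost p g i ^ p ^ (n - i))]
      exact Classical.epsilon_spec (p := fun c : R => (p : R) ^ n * c = _) ⟨c, hc.symm⟩
    rw [ghostComponent_eq_sum, sum_range_succ, Nat.sub_self, pow_zero, pow_one, hspec,
      add_sub_cancel]
  refine ⟨x, fun n => ?_⟩
  induction n with
  | zero => exact hcoeff 0 (by simp)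
  | succ n ih =>
    refine hcoeff (n + 1) ?_
    have := hg x n ih
    rw [ghostComponent_eq_sum (n + 1), sum_range_succ, Nat.sub_self, pow_zero, pow_one,
      ← sub_sub] at this
    exact (dvd_sub_left (dvd_mul_right _ _)).mp this

theorem pow_succ_dvd_map_ghostComponent_sub {φ : R →+* R}
    (hφ : ∀ a : R, φ a - a ^ p ∈ Ideal.span {(p : R)}) (x : WittVector p R) (n : ℕ) :
    (p : R) ^ (n + 1) ∣ φ (ghostComponent n x) - ghostComponent (n + 1) x := by
  have hpow (a : R) (k : ℕ) : (p : R) ^ (k + 1) ∣ φ a ^ p ^ k - a ^ p ^ (k + 1) := by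
    rw [pow_succ' p, pow_mul]
    exact dvd_sub_pow_of_dvd_sub (Ideal.mem_span_singleton.mp (hφ a)) k
  rw [ghostComponent_eq_sum, ghostComponent_eq_sum (n + 1), sum_range_succ _ (n + 1),
    Nat.sub_self, pow_zero, pow_one, ← sub_sub, map_sum, ← sum_sub_distrib]
  refine dvd_sub (dvd_sum fun i hi => ?_) (dvd_mul_right _ _)
  have hi : i ≤ n := Nat.lt_succ_iff.mp (mem_range.mp hi)
  rw [map_mul, map_pow, map_pow, map_natCast, ← mul_sub,
    ← pow_mul_pow_sub (p : R) (by omega : i ≤ n + 1), Nat.sub_add_comm hi]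
  exact mul_dvd_mul_left _ (hpow _ _)

theorem exists_ghostComponent_eq_iterate {φ : R →+* R}
    (hφ : ∀ a : R, φ a - a ^ p ∈ Ideal.span {(p : R)}) (a : R) :
    ∃ x : WittVector p R, ∀ n, ghostComponent n x = φ^[n] a :=
  exists_ghostComponent_eq_of_pow_succ_dvd _ fun x n hx => by
    rw [Function.iterate_succ_apply', ← hx]
    exact pow_succ_dvd_map_ghostComponent_sub hφ x n

end WittVector

/-- If `A` is a commutative ring in which `p` is a nonzerodivisor and `φ : A → A` is a
Frobenius lift (i.e. `φ a ≡ a ^ p mod p`), then there is a unique ring homomorphism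
`β : A → 𝕎 A` to the `p`-typical Witt vectors whose `n`-th ghost component is `φⁿ`. -/
theorem exists_unique_section_to_wittVector (p : ℕ) [hp : Fact p.Prime] (A : Type*) [CommRing A]
    (hA : (p : A) ∈ nonZeroDivisors A)
    (φ : A →+* A) (hφ : ∀ a : A, φ a - a ^ p ∈ Ideal.span {(p : A)}) :
    ∃! β : A →+* WittVector p A,
      ∀ (a : A) (n : ℕ), WittVector.ghostComponent n (β a) = (⇑φ)^[n] a := by
  have key := RingHom.existsUnique_comp_eq_of_injective (WittVector.ghostMap_injective hA)
    (RingHom.pi fun n => φ ^ n) fun a => by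
      obtain ⟨x, hx⟩ := WittVector.exists_ghostComponent_eq_iterate hφ a
      exact ⟨x, funext fun n => by simp [hx, RingHom.coe_pow]⟩
  refine (existsUnique_congr fun β => ?_).mp key
  simp [RingHom.ext_iff, funext_iff, RingHom.coe_pow]
end

section
/- Let p be a prime and A a commutative ring in which p is not a zero divisor, equipped with a Frobenius lift φ : A → A (a ring endomorphism with φ(a) - a^p ∈ pA for all a). Let B₀ be a commutative ring of characteristic p and let f : A → B₀ be a ring homomorphism. Then there exists a ring homomorphism g : A → 𝕎 B₀ to the p-typical Witt vectors of B₀ such that the 0-th ghost component (equivalently, the 0-th Witt coordinate) of g(a) equals f(a) for every a ∈ A, and such that g ∘ φ = F ∘ g, where F : 𝕎 B₀ → 𝕎 B₀ is the Witt vector Frobenius ring homomorphism. -/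
/-!
Since `p` is a nonzerodivisor in `A`, a Witt vector over `A` is determined by its ghost
components. Dwork's congruence `w_{n+1}(x) ≡ φ (w_n(x)) mod p^{n+1}` lets one solve, one
coordinate at a time, for a Witt vector whose ghost components are `a, φ a, φ² a, …`.
As `a ↦ (φⁿ a)ₙ` is a ring homomorphism, this gives a ring homomorphism `s : A → 𝕎 A`,
and `s ∘ φ = F ∘ s` because `F` shifts ghost components. Then `g = 𝕎(f) ∘ s`.
-/

open Finset MvPolynomial

theorem RingHom.exists_comp_eq_of_injective {R S T : Type*} [Semiring R] [Semiring S] [Semiring T]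
    (f : R →+* T) (hf : Function.Injective f) (g : S →+* T) (hg : ∀ s, g s ∈ Set.range f) :
    ∃ h : S →+* R, f.comp h = g := by
  choose h hh using hg
  refine ⟨
    { toFun := h
      map_one' := hf ?_
      map_mul' := fun a b => hf ?_
      map_zero' := hf ?_
      map_add' := fun a b => hf ?_ }, RingHom.ext hh⟩ <;> simp [hh]

namespace WittVector

variable {p : ℕ} {R S : Type*} [CommRing R] [CommRing S]

-- `epsilon` picks a solution `q` of `p ^ n * q = …` whenever one exists; Dwork's congruence
-- guarantees that it does.
variable (p) in
noncomputable def frobeniusLiftCoeff (φ : R →+* R) (a : R) (n : ℕ) : R :=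
  Classical.epsilon fun q : R => (p : R) ^ n * q =
    φ^[n] a - ∑ i : Fin n, (p : R) ^ (i : ℕ) * frobeniusLiftCoeff φ a i ^ p ^ (n - i)
decreasing_by exact i.2

theorem pow_mul_frobeniusLiftCoeff {φ : R →+* R} {a : R} {n : ℕ}
    (h : (p : R) ^ n ∣ φ^[n] a -
      ∑ i ∈ range n, (p : R) ^ i * frobeniusLiftCoeff p φ a i ^ p ^ (n - i)) :
    (p : R) ^ n * frobeniusLiftCoeff p φ a n =
      φ^[n] a - ∑ i ∈ range n, (p : R) ^ i * frobeniusLiftCoeff p φ a i ^ p ^ (n - i) := by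
  rw [← Fin.sum_univ_eq_sum_range
    (fun i => (p : R) ^ i * frobeniusLiftCoeff p φ a i ^ p ^ (n - i))] at h ⊢
  rw [frobeniusLiftCoeff]
  obtain ⟨q, hq⟩ := h
  exact Classical.epsilon_spec (p := fun c => _ = _) ⟨q, hq.symm⟩

variable [Fact p.Prime]

theorem ghostComponent_eq_sum_add (x : WittVector p R) (n : ℕ) :
    ghostComponent n x =
      ∑ i ∈ range n, (p : R) ^ i * x.coeff i ^ p ^ (n - i) + (p : R) ^ n * x.coeff n := by
  rw [ghostComponent_apply, aeval_wittPolynomial, sum_range_succ, Nat.sub_self, pow_zero,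
    pow_one]

theorem ghostComponent_zero (x : WittVector p R) : ghostComponent 0 x = x.coeff 0 := by
  simp [ghostComponent_eq_sum_add]

theorem ghostMap_injective_of_mem_nonZeroDivisors (hp : (p : R) ∈ nonZeroDivisors R) :
    Function.Injective (ghostMap : WittVector p R → ℕ → R) := by
  intro x y h
  ext n
  induction n using Nat.strong_induction_on with
  | _ n ih =>
    have hn := congr_fun h n
    simp only [ghostMap_apply, ghostComponent_eq_sum_add] at hn
    rw [sum_congr rfl fun i hi => by rw [ih i (mem_range.mp hi)]] at hn
    exact (mul_cancel_left_mem_nonZeroDivisors (pow_mem hp n)).mp (add_left_cancel hn)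

theorem pow_dvd_ghostComponent_succ_sub {φ : R →+* R} (hφ : ∀ a, (p : R) ∣ φ a - a ^ p)
    (x : WittVector p R) (n : ℕ) :
    (p : R) ^ (n + 1) ∣ ghostComponent (n + 1) x - φ (ghostComponent n x) := by
  rw [ghostComponent_eq_sum_add x (n + 1), ghostComponent_apply, aeval_wittPolynomial, map_sum,
    add_sub_right_comm, ← sum_sub_distrib]
  refine dvd_add (dvd_sum fun i hi => ?_) (dvd_mul_right _ _)
  have hi : i ≤ n := Nat.lt_succ_iff.mp (mem_range.mp hi)
  have hpx : (p : R) ∣ x.coeff i ^ p - φ (x.coeff i) := by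
    simpa using (hφ (x.coeff i)).neg_right
  calc (p : R) ^ (n + 1) = p ^ i * p ^ (n - i + 1) := by rw [← pow_add]; congr 1; omega
    _ ∣ p ^ i * ((x.coeff i ^ p) ^ p ^ (n - i) - φ (x.coeff i) ^ p ^ (n - i)) :=
      mul_dvd_mul_left _ (dvd_sub_pow_of_dvd_sub hpx _)
    _ = _ := by
      rw [map_mul, map_pow, map_pow, map_natCast, ← pow_mul, ← pow_succ', mul_sub,
        Nat.sub_add_comm hi]

-- `IsPoly.map` gives this only for `R` and `S` in the same universe.
theorem map_frobenius (f : R →+* S) (x : WittVector p R) :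
    map f (frobenius x) = frobenius (map f x) := by
  ext n
  simp_rw [map_coeff, coeff_frobenius, map_aeval, funext (map_coeff f _),
    RingHom.ext_int _ (algebraMap ℤ S), aeval_eq_eval₂Hom]

theorem ghostComponent_mk_frobeniusLiftCoeff {φ : R →+* R}
    (hφ : ∀ a, (p : R) ∣ φ a - a ^ p) (a : R) (n : ℕ) :
    ghostComponent n (mk p (frobeniusLiftCoeff p φ a)) = φ^[n] a := by
  induction n using Nat.strong_induction_on with
  | _ n ih =>
    rw [ghostComponent_eq_sum_add]
    simp only [coeff_mk]
    -- what remains is the divisibility that makes `epsilon` choose a genuine solution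
    rw [pow_mul_frobeniusLiftCoeff, add_sub_cancel]
    rcases n with _ | k
    · simp
    · have h := pow_dvd_ghostComponent_succ_sub hφ (mk p (frobeniusLiftCoeff p φ a)) k
      rw [ih k k.lt_succ_self, ← Function.iterate_succ_apply' φ k a,
        ghostComponent_eq_sum_add] at h
      simp only [coeff_mk] at h
      convert dvd_sub (dvd_mul_right _ (frobeniusLiftCoeff p φ a (k + 1))) h using 1
      ring

theorem exists_ringHom_ghostComponent_eq_iterate (hp : (p : R) ∈ nonZeroDivisors R)
    {φ : R →+* R} (hφ : ∀ a, (p : R) ∣ φ a - a ^ p) :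
    ∃ s : R →+* WittVector p R, ∀ a n, ghostComponent n (s a) = φ^[n] a := by
  obtain ⟨s, hs⟩ := RingHom.exists_comp_eq_of_injective ghostMap
    (ghostMap_injective_of_mem_nonZeroDivisors hp) (RingHom.pi fun n => φ ^ n)
    fun a => ⟨mk p (frobeniusLiftCoeff p φ a),
      funext fun n => by simp [ghostComponent_mk_frobeniusLiftCoeff hφ, RingHom.coe_pow]⟩
  exact ⟨s, fun a n => by
    simpa [RingHom.coe_pow] using congr_fun (RingHom.congr_fun hs a) n⟩

theorem exists_ringHom_coeff_zero_eq_and_frobenius_comm (hp : (p : R) ∈ nonZeroDivisors R)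
    {φ : R →+* R} (hφ : ∀ a, (p : R) ∣ φ a - a ^ p) :
    ∃ s : R →+* WittVector p R, (∀ a, (s a).coeff 0 = a) ∧ ∀ a, s (φ a) = frobenius (s a) := by
  obtain ⟨s, hs⟩ := exists_ringHom_ghostComponent_eq_iterate hp hφ
  refine ⟨s, fun a => by rw [← ghostComponent_zero, hs, Function.iterate_zero_apply],
    fun a => ghostMap_injective_of_mem_nonZeroDivisors hp (funext fun n => ?_)⟩
  rw [ghostMap_apply, ghostMap_apply, ghostComponent_frobenius, hs, hs,
    Function.iterate_succ_apply]

end WittVector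

theorem exists_hom_to_wittVector_lifting_general (p : ℕ) [hp : Fact p.Prime] (A : Type*) [CommRing A]
    (hA : (p : A) ∈ nonZeroDivisors A)
    (φ : A →+* A) (hφ : ∀ a : A, φ a - a ^ p ∈ Ideal.span {(p : A)})
    (B₀ : Type*) [CommRing B₀] (f : A →+* B₀) :
    ∃ g : A →+* WittVector p B₀,
      (∀ a : A, WittVector.ghostComponent 0 (g a) = f a) ∧
        (∀ a : A, g (φ a) = WittVector.frobenius (g a)) := by
  obtain ⟨s, hs₀, hsφ⟩ := WittVector.exists_ringHom_coeff_zero_eq_and_frobenius_comm hA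
    fun a => Ideal.mem_span_singleton.mp (hφ a)
  refine ⟨(WittVector.map f).comp s, fun a => ?_, fun a => ?_⟩
  · rw [RingHom.comp_apply, WittVector.ghostComponent_zero, WittVector.map_coeff, hs₀]
  · rw [RingHom.comp_apply, RingHom.comp_apply, hsφ, WittVector.map_frobenius]

/-- Let `A` be a commutative ring in which `p` is a nonzerodivisor, equipped with a Frobenius
lift `φ`, let `B₀` be a ring of characteristic `p` and `f : A → B₀` a ring homomorphism. Then
there is a ring homomorphism `g : A → 𝕎 B₀` lifting `f` (its `0`-th ghost component is `f`)
and intertwining `φ` with the Witt vector Frobenius. -/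
theorem exists_hom_to_wittVector_lifting (p : ℕ) [hp : Fact p.Prime] (A : Type*) [CommRing A]
    (hA : (p : A) ∈ nonZeroDivisors A)
    (φ : A →+* A) (hφ : ∀ a : A, φ a - a ^ p ∈ Ideal.span {(p : A)})
    (B₀ : Type*) [CommRing B₀] [CharP B₀ p] (f : A →+* B₀) :
    ∃ g : A →+* WittVector p B₀,
      (∀ a : A, WittVector.ghostComponent 0 (g a) = f a) ∧
        (∀ a : A, g (φ a) = WittVector.frobenius (g a)) :=
  exists_hom_to_wittVector_lifting_general p (hp := hp) A hA φ hφ B₀ f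
end

section
/- Let S be a commutative ring, φ : S → S a ring endomorphism, I an ideal of S, φ₁ : I → S an additive map, and ϖ ∈ S an element such that φ(s) = ϖ · φ₁(s) for every s ∈ I. Assume the image of φ₁ generates the unit ideal: there exist a natural number n and families a : Fin n → S and b : Fin n → I with ∑ᵢ aᵢ · φ₁(bᵢ) = 1. Let M be an S-module, Fil M a submodule of M such that s·m ∈ Fil M for every s ∈ I and m ∈ M, let φ_M : M → M be an additive map, and let φ_{M,1} : Fil M → M be an additive map which is φ-semilinear (φ_{M,1}(s·m) = φ(s)·φ_{M,1}(m) for every s ∈ S and m ∈ Fil M) and which satisfies φ_{M,1}(s·m) = φ₁(s)·φ_M(m) for every s ∈ I and m ∈ M. Then φ_M(m) = ϖ · φ_{M,1}(m) for every m ∈ Fil M. -/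
theorem eq_of_smul_eq_of_sum_mul_eq_one {R M ι : Type*} [Semiring R] [AddCommMonoid M]
    [Module R M] (s : Finset ι) (a c : ι → R) (hac : ∑ i ∈ s, a i * c i = 1) {x y : M}
    (hxy : ∀ i ∈ s, c i • x = c i • y) : x = y := by
  have expand (z : M) : z = ∑ i ∈ s, a i • c i • z := by
    simp_rw [← mul_smul, ← Finset.sum_smul, hac, one_smul]
  calc x = ∑ i ∈ s, a i • c i • x := expand x
    _ = ∑ i ∈ s, a i • c i • y := Finset.sum_congr rfl fun i hi => by rw [hxy i hi]
    _ = y := (expand y).symm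

/-- For a frame `(S, I, φ, φ₁, ϖ)` satisfying the surjectivity condition (the image of `φ₁`
generates the unit ideal), window axiom (2) — `φ_{M,1}(s • m) = φ₁(s) • φ_M(m)` for `s ∈ I`,
`m ∈ M` — together with `φ`-semilinearity of `φ_{M,1}` implies window axiom (3):
`φ_M(m) = ϖ • φ_{M,1}(m)` for all `m ∈ Fil M`. -/
theorem window_axiom_two_implies_three (S : Type*) [CommRing S] (φ : S →+* S) (I : Ideal S)
    (φ₁ : I →+ S) (ϖ : S) (hframe : ∀ s : I, φ (s : S) = ϖ * φ₁ s)
    (hsurj : ∃ (n : ℕ) (a : Fin n → S) (b : Fin n → I), ∑ i, a i * φ₁ (b i) = 1)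
    (M : Type*) [AddCommGroup M] [Module S M]
    (Fil : Submodule S M) (hFil : ∀ s ∈ I, ∀ m : M, s • m ∈ Fil)
    (φM : M →+ M) (φM1 : Fil →+ M)
    (hsemi : ∀ (s : S) (m : Fil), φM1 (s • m) = φ s • φM1 m)
    (hax2 : ∀ (s : I) (m : M), φM1 ⟨(s : S) • m, hFil (s : S) s.2 m⟩ = φ₁ s • φM m) :
    ∀ m : Fil, φM (m : M) = ϖ • φM1 m := by
  intro m
  obtain ⟨n, a, b, hab⟩ := hsurj
  refine eq_of_smul_eq_of_sum_mul_eq_one Finset.univ a (fun i => φ₁ (b i)) hab fun i _ => ?_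
  calc φ₁ (b i) • φM m = φM1 ((b i : S) • m) := (hax2 (b i) m).symm
    _ = (ϖ * φ₁ (b i)) • φM1 m := by rw [hsemi, hframe]
    _ = φ₁ (b i) • ϖ • φM1 m := by rw [mul_comm, mul_smul]
end

section
/- Let p be a prime, R a commutative ring, 𝔖 = R⟦u⟧ the formal power series ring, and c = u^p + p ∈ 𝔖. Fix natural numbers r, s and matrices A (r×r), B (r×s), C (s×r), D (s×s) over 𝔖, and let Y be the (r+s)×(r+s) block matrix (I_r + p·A, p·B; p·C, I_s + p·D) over 𝔖. Let 𝔖_c denote the localization of 𝔖 away from c, and define the block matrix Z over 𝔖_c with blocks Z₁₁ = I_r + p·A, Z₁₂ = p²·B·c⁻¹, Z₂₁ = c·C, Z₂₂ = I_s + p·D (images of entries taken in 𝔖_c). Then: (1) with X' the block matrix (c·I_r, 0; 0, p·I_s), the identity X'·Z = Y·X' holds over 𝔖_c; and (2) writing 𝔖₀ = (R/pR)⟦u⟧ for the reduction mod p of 𝔖, the ring homomorphism 𝔖 → 𝔖₀ (reducing coefficients mod p) sends c to u^p and hence induces a ring homomorphism ρ : 𝔖_c → (𝔖₀ localized away from u^p),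 and the matrix ρ(Z) equals the image of the block matrix (I_r, 0; u^p·C̄, I_s) over 𝔖₀, where C̄ is the reduction of C mod p; in particular ρ(Z) comes from a matrix over 𝔖₀ whose constant term (reduction modulo u) is the identity matrix. -/
/-!
Conjugating a block matrix by `diag(a, b)` multiplies its off-diagonal blocks by `a/b` and `b/a`;
with `a = c` and `b = p` this turns the off-diagonal blocks `pB, pC` of `Y` into `p²Bc⁻¹, cC`,
which is identity (1). Reduction modulo `p` kills `p`, so `ρ` sends the diagonal blocks of `Z`
to `1`, the block `p²Bc⁻¹` to `0` and `cC` to `u^p C̄`; the constant term of `u^p` vanishes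
since `p ≠ 0`.
-/

open PowerSeries Matrix

namespace Matrix

variable {m n S T : Type*}

theorem map_ringHom_smul [NonAssocSemiring S] [NonAssocSemiring T] (f : S →+* T) (a : S)
    (M : Matrix m n S) : (a • M).map f = f a • M.map f :=
  Matrix.map_smulₛₗ f f a (map_mul f a) M

theorem map_one_add_smul [DecidableEq n] [NonAssocSemiring S] [NonAssocSemiring T] (f : S →+* T)
    (a : S) (M : Matrix n n S) : (1 + a • M).map f = 1 + f a • M.map f := by
  rw [Matrix.map_add f (map_add f), Matrix.map_one f (map_zero f) (map_one f), map_ringHom_smul]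

theorem fromBlocks_smul_one_mul_eq_mul_fromBlocks_smul_one [Fintype m] [Fintype n]
    [DecidableEq m] [DecidableEq n] [CommSemiring S] {a a' : S} (ha : a * a' = 1) (b : S)
    (P : Matrix m m S) (Q : Matrix m n S) (R : Matrix n m S) (T : Matrix n n S) :
    fromBlocks (a • 1) 0 0 (b • 1) * fromBlocks P (a' • b ^ 2 • Q) (a • R) T =
      fromBlocks P (b • Q) (b • R) T * fromBlocks (a • 1) 0 0 (b • 1) := by
  simp only [fromBlocks_multiply, Matrix.smul_mul, Matrix.mul_smul, Matrix.one_mul,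
    Matrix.mul_one, Matrix.zero_mul, Matrix.mul_zero, smul_zero, add_zero, zero_add, smul_smul]
  rw [mul_right_comm, mul_comm a' a, ha, one_mul, sq]

theorem map_fromBlocks_one_add_smul_of_map_eq_zero [DecidableEq m] [DecidableEq n]
    [CommSemiring S] [CommSemiring T] (f : S →+* T) {b : S} (hb : f b = 0) (a a' : S)
    (P : Matrix m m S) (Q : Matrix m n S) (R : Matrix n m S) (T : Matrix n n S) :
    (fromBlocks (1 + b • P) (a' • b ^ 2 • Q) (a • R) (1 + b • T)).map f =
      fromBlocks 1 0 (f a • R.map f) 1 := by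
  simp only [fromBlocks_map, map_one_add_smul, map_ringHom_smul, map_pow, hb, zero_smul,
    add_zero, zero_pow two_ne_zero, smul_zero]

theorem map_fromBlocks_one_zero_smul_one_of_map_eq_zero [DecidableEq m] [DecidableEq n]
    [Semiring S] [Semiring T] (f : S →+* T) {a : S} (ha : f a = 0)
    (M : Matrix n m S) :
    (fromBlocks (1 : Matrix m m S) 0 (a • M) (1 : Matrix n n S)).map f = 1 := by
  simp only [fromBlocks_map, map_ringHom_smul, ha, zero_smul, Matrix.map_one, Matrix.map_zero,
    map_zero, map_one, fromBlocks_one]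

end Matrix

theorem PowerSeries.map_X_pow_add_natCast {R S : Type*} [CommRing R] [CommRing S] (f : R →+* S)
    {p : ℕ} (hp : (p : S) = 0) (n : ℕ) :
    PowerSeries.map f (X ^ n + (p : R⟦X⟧)) = X ^ n := by
  rw [map_add, map_pow, map_X, map_natCast, ← map_natCast (C (R := S)), hp, map_zero, add_zero]

/-- The matrix computation in the comparison of adapted deformations for two Frobenius lifts.
Let `𝔖 = R⟦u⟧`, `c = u^p + p`, `Y` the block matrix `(1 + pA, pB; pC, 1 + pD)` over `𝔖`, and
`Z` the block matrix `(1 + pA, p²Bc⁻¹; cC, 1 + pD)` over the localization `𝔖_c` of `𝔖` away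
from `c`. Then (1) with `X' = (c·1, 0; 0, p·1)` one has `X'·Z = Y·X'` over `𝔖_c`; and
(2) the reduction `𝔖 → 𝔖₀ = (R/p)⟦u⟧` sends `c` to `u^p`, hence induces
`ρ : 𝔖_c → (𝔖₀)_{u^p}`, and `ρ(Z)` is the image of the block matrix `(1, 0; u^p·C̄, 1)` over
`𝔖₀`, whose reduction modulo `u` (constant term) is the identity matrix. -/
theorem adapted_deformation_matrix_computation (p : ℕ) [Fact p.Prime] (R : Type*) [CommRing R]
    (r s : ℕ)
    (A : Matrix (Fin r) (Fin r) (PowerSeries R))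
    (B : Matrix (Fin r) (Fin s) (PowerSeries R))
    (C : Matrix (Fin s) (Fin r) (PowerSeries R))
    (D : Matrix (Fin s) (Fin s) (PowerSeries R)) :
    let R₀ := R ⧸ Ideal.span {(p : R)}
    let c : PowerSeries R := X ^ p + (p : PowerSeries R)
    let Y := fromBlocks (1 + (p : PowerSeries R) • A) ((p : PowerSeries R) • B)
      ((p : PowerSeries R) • C) (1 + (p : PowerSeries R) • D)
    let ι := algebraMap (PowerSeries R) (Localization.Away c)
    let cinv := IsLocalization.Away.invSelf (S := Localization.Away c) c
    let Z := fromBlocks ((1 + (p : PowerSeries R) • A).map ι)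
      (cinv • (((p : PowerSeries R) ^ 2 • B).map ι))
      ((c • C).map ι) ((1 + (p : PowerSeries R) • D).map ι)
    let X' := fromBlocks (ι c • (1 : Matrix (Fin r) (Fin r) (Localization.Away c))) 0 0
      ((p : Localization.Away c) • (1 : Matrix (Fin s) (Fin s) (Localization.Away c)))
    let q : PowerSeries R →+* PowerSeries R₀ :=
      PowerSeries.map (Ideal.Quotient.mk (Ideal.span {(p : R)}))
    X' * Z = Y.map ι * X' ∧
    q c = (X : PowerSeries R₀) ^ p ∧
    ∃ ρ : Localization.Away c →+* Localization.Away ((X : PowerSeries R₀) ^ p),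
      (∀ x : PowerSeries R, ρ (ι x) =
          algebraMap (PowerSeries R₀) (Localization.Away ((X : PowerSeries R₀) ^ p)) (q x)) ∧
      Z.map ρ = (fromBlocks 1 0 (((X : PowerSeries R₀) ^ p) • C.map q) 1).map
        (algebraMap (PowerSeries R₀) (Localization.Away ((X : PowerSeries R₀) ^ p))) ∧
      (fromBlocks (1 : Matrix (Fin r) (Fin r) (PowerSeries R₀)) 0
          (((X : PowerSeries R₀) ^ p) • C.map q)
          (1 : Matrix (Fin s) (Fin s) (PowerSeries R₀))).map (constantCoeff : PowerSeries R₀ →+* R₀) = 1 := by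
  intro R₀ c Y ι cinv Z X' q
  have hp : (p : R₀) = 0 := Ideal.Quotient.eq_zero_iff_mem.mpr (Ideal.mem_span_singleton_self _)
  have hqc : q c = X ^ p := PowerSeries.map_X_pow_add_natCast _ hp p
  have hZ : Z = fromBlocks (1 + (p : Localization.Away c) • A.map ι)
      (cinv • (p : Localization.Away c) ^ 2 • B.map ι) (ι c • C.map ι)
      (1 + (p : Localization.Away c) • D.map ι) := by
    simp only [Z, map_one_add_smul, map_ringHom_smul, map_pow, map_natCast]
  have hY : Y.map ι = fromBlocks (1 + (p : Localization.Away c) • A.map ι)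
      ((p : Localization.Away c) • B.map ι) ((p : Localization.Away c) • C.map ι)
      (1 + (p : Localization.Away c) • D.map ι) := by
    simp only [Y, fromBlocks_map, map_one_add_smul, map_ringHom_smul, map_natCast]
  refine ⟨?_, hqc, ?_⟩
  · rw [hZ, hY]
    exact fromBlocks_smul_one_mul_eq_mul_fromBlocks_smul_one (IsLocalization.Away.mul_invSelf c) _
      _ _ _ _
  · have hunit : IsUnit ((algebraMap _ (Localization.Away ((X : R₀⟦X⟧) ^ p))).comp q c) := by
      rw [RingHom.comp_apply, hqc]
      exact IsLocalization.Away.algebraMap_isUnit _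
    let ρ := IsLocalization.Away.lift (S := Localization.Away c) c hunit
    have hρι : ⇑ρ ∘ ⇑ι = ⇑(algebraMap _ _) ∘ ⇑q :=
      congrArg DFunLike.coe (IsLocalization.Away.lift_comp c hunit)
    have hρp : ρ p = 0 := by
      rw [map_natCast, ← map_natCast (algebraMap R₀ (Localization.Away ((X : R₀⟦X⟧) ^ p))), hp,
        map_zero]
    refine ⟨ρ, congrFun hρι, ?_, ?_⟩
    · rw [hZ, map_fromBlocks_one_add_smul_of_map_eq_zero ρ hρp, fromBlocks_map,
        ← Function.comp_apply (f := ρ), hρι, Function.comp_apply, hqc, map_ringHom_smul,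
        Matrix.map_map, Matrix.map_map, hρι]
      simp only [Matrix.map_one, Matrix.map_zero, map_zero, map_one]
    · refine map_fromBlocks_one_zero_smul_one_of_map_eq_zero _ ?_ _
      rw [map_pow, constantCoeff_X, zero_pow (Fact.out : p.Prime).ne_zero]
end
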